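/- arXiv:1811.06592 — 2 statements merged into one kernel-verified Lean document; each statement's English description precedes it below -/
import Mathlib

section
/- For all integers 0 ≤ n ≤ m, every real α > 0, and every real x, the Laguerre polynomials expand in Hermite polynomials as L_{m−n}^{(α+n)}(−2x) = Σ_{p=n}^{m} [ (α+p+1)_{m−p} / ((m−p)! (p−n)!) ] · ( Σ_{l=0}^{m−p} ((p−m)/2)_l ((p−m+1)/2)_l / ( ((α+p+1)/2)_l ((α+p+2)/2)_l · l! ) ) · H_{p−n}(x). -/
open scoped BigOperators
open Matrix MeasureTheory

noncomputable section

/-- Pochhammer symbol `(a)_m = a(a+1)⋯(a+m-1)`. -/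
def poch (a : ℝ) (m : ℕ) : ℝ := ∏ i ∈ Finset.range m, (a + i)

/-- Generalized Laguerre polynomial `L_n^{(α)}(x)`. -/
def lagP (α : ℝ) (n : ℕ) (x : ℝ) : ℝ :=
  ∑ k ∈ Finset.range (n + 1),
    (-1 : ℝ) ^ k * poch (α + k + 1) (n - k) * x ^ k / ((n - k).factorial * k.factorial)

/-- The matrix `L_μ^{(α)}(x)`; the 0-based index pair `(i,j)` corresponds to the
1-based index pair `(i+1, j+1)` of the paper. -/
def LagMat (N : ℕ) (μ : Fin N → ℝ) (α : ℝ) (x : ℝ) : Matrix (Fin N) (Fin N) ℝ :=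
  Matrix.of fun m n : Fin N =>
    if (n : ℕ) ≤ (m : ℕ) then μ m / μ n * lagP (α + (n : ℕ) + 1) ((m : ℕ) - (n : ℕ)) x else 0

/-- The matrix `A_μ = S_μ A S_μ⁻¹`, written entrywise. -/
def AmuMat (N : ℕ) (μ : Fin N → ℝ) : Matrix (Fin N) (Fin N) ℝ :=
  Matrix.of fun i j : Fin N => if (i : ℕ) = (j : ℕ) + 1 then -(μ i / μ j) else 0

/-- `J = diag(1,…,N)`. -/
def Jmat (N : ℕ) : Matrix (Fin N) (Fin N) ℝ :=
  Matrix.diagonal fun i => ((i : ℕ) + 1 : ℝ)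

/-- `T^{(ν)}(x) = e^{-x} Σ_k δ_k x^{ν+k} E_{k,k}`. -/
def Tmat (N : ℕ) (δ : Fin N → ℝ) (ν : ℝ) (x : ℝ) : Matrix (Fin N) (Fin N) ℝ :=
  Matrix.diagonal fun k => Real.exp (-x) * δ k * x ^ (ν + (k : ℕ) + 1)

/-- The weight `W_μ^{(α,ν)}(x) = L_μ^{(α)}(x) T^{(ν)}(x) L_μ^{(α)}(x)^*`. -/
def Wmat (N : ℕ) (μ δ : Fin N → ℝ) (α ν : ℝ) (x : ℝ) : Matrix (Fin N) (Fin N) ℝ :=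
  LagMat N μ α x * Tmat N δ ν x * (LagMat N μ α x)ᵀ

/-- Entrywise evaluation of a matrix of polynomials. -/
def matPolyEval {N : ℕ} (P : Matrix (Fin N) (Fin N) (Polynomial ℝ)) (x : ℝ) :
    Matrix (Fin N) (Fin N) ℝ :=
  Matrix.of fun i j => (P i j).eval x

/-- Entrywise derivative of a matrix of polynomials. -/
def matPolyDeriv {N : ℕ} (P : Matrix (Fin N) (Fin N) (Polynomial ℝ)) :
    Matrix (Fin N) (Fin N) (Polynomial ℝ) :=
  Matrix.of fun i j => Polynomial.derivative (P i j)

/-- `P` is the monic (matrix valued) orthogonal polynomial of degree `n` w.r.t. the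
weight `W` on `(0,∞)`. -/
def MonicOrth (N : ℕ) (W : ℝ → Matrix (Fin N) (Fin N) ℝ) (n : ℕ)
    (P : Matrix (Fin N) (Fin N) (Polynomial ℝ)) : Prop :=
  (∀ i j, (P i j).degree ≤ n) ∧
  Matrix.of (fun i j => (P i j).coeff n) = (1 : Matrix (Fin N) (Fin N) ℝ) ∧
  ∀ k, k < n → ∀ i j, (∫ x in Set.Ioi (0 : ℝ), (matPolyEval P x * W x) i j * x ^ k) = 0

/-- Conditions (C1) and (C2) at level `ν`, relating `δ = δ^{(ν)}`, `δ' = δ^{(ν+1)}`,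
`c = c^{(ν)}` and `d = d^{(ν)}`. -/
def PearsonCond (N : ℕ) (μ δ δ' : Fin N → ℝ) (c d : ℝ) : Prop :=
  0 < c ∧ 0 < d ∧
  (∀ k : Fin N, δ' k = (((k : ℕ) + 1) * d + c) * δ k) ∧
  ∀ (k : Fin N) (h : (k : ℕ) + 1 < N),
    μ ⟨(k : ℕ) + 1, h⟩ ^ 2 / μ k ^ 2 =
      d * ((k : ℕ) + 1) * ((N : ℝ) - ((k : ℕ) + 1)) * δ ⟨(k : ℕ) + 1, h⟩ / δ' k

/-- `Φ^{(α,ν)}(x)` (with `c = c^{(ν)}`, `d = d^{(ν)}`). -/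
def PhiMat (N : ℕ) (μ : Fin N → ℝ) (α c d : ℝ) (x : ℝ) : Matrix (Fin N) (Fin N) ℝ :=
  ((LagMat N μ α 0)ᵀ)⁻¹ *
    (-(d * x ^ 2) • (AmuMat N μ)ᵀ + x • (d • Jmat N + c • (1 : Matrix (Fin N) (Fin N) ℝ))) *
    (LagMat N μ α 0)ᵀ

/-- `Ψ^{(α,ν)}(x)` (with `δ = δ^{(ν)}`, `δ' = δ^{(ν+1)}`, `c = c^{(ν)}`, `d = d^{(ν)}`). -/
def PsiMat (N : ℕ) (μ δ δ' : Fin N → ℝ) (α ν c d : ℝ) (x : ℝ) : Matrix (Fin N) (Fin N) ℝ :=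
  ((LagMat N μ α 0)ᵀ)⁻¹ *
    (x • (d • (Jmat N - (AmuMat N μ)ᵀ * (Jmat N + (ν + 1) • (1 : Matrix (Fin N) (Fin N) ℝ)) -
        ((N : ℝ) + 1) • (1 : Matrix (Fin N) (Fin N) ℝ)) - c • (1 : Matrix (Fin N) (Fin N) ℝ)) +
      (Jmat N + (ν + 1) • (1 : Matrix (Fin N) (Fin N) ℝ)) *
        (d • Jmat N + c • (1 : Matrix (Fin N) (Fin N) ℝ)) +
      (Matrix.diagonal δ)⁻¹ * AmuMat N μ * Matrix.diagonal δ') *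
    (LagMat N μ α 0)ᵀ

/-- `K_n^{(β,ν)}` (with `c = c^{(ν)}`, `d = d^{(ν)}`). -/
def Kmat (N : ℕ) (μ : Fin N → ℝ) (β ν c d : ℝ) (n : ℕ) : Matrix (Fin N) (Fin N) ℝ :=
  LagMat N μ β 0 *
    (d • (Jmat N - (Jmat N + (ν + n) • (1 : Matrix (Fin N) (Fin N) ℝ)) * AmuMat N μ -
      ((N : ℝ) + 1) • (1 : Matrix (Fin N) (Fin N) ℝ)) - c • (1 : Matrix (Fin N) (Fin N) ℝ)) *
    (LagMat N μ β 0)⁻¹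

/-- `(Q D^{(α,ν)})(x)` for a matrix valued polynomial `Q`. -/
def Dapply (N : ℕ) (μ : Fin N → ℝ) (α ν : ℝ)
    (Q : Matrix (Fin N) (Fin N) (Polynomial ℝ)) (x : ℝ) : Matrix (Fin N) (Fin N) ℝ :=
  x • matPolyEval (matPolyDeriv (matPolyDeriv Q)) x +
    matPolyEval (matPolyDeriv Q) x *
      ((-x) • (AmuMat N μ + 1)⁻¹ + (ν + 1) • (1 : Matrix (Fin N) (Fin N) ℝ) + Jmat N +
        (α • (1 : Matrix (Fin N) (Fin N) ℝ) + Jmat N) * AmuMat N μ) +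
    matPolyEval Q x * ((α - ν) • (AmuMat N μ + 1)⁻¹ - Jmat N)

/-- Physicists' Hermite polynomial `H_q(x)`. -/
def hermiteP (q : ℕ) (x : ℝ) : ℝ :=
  (q.factorial : ℝ) * ∑ m ∈ Finset.range (q / 2 + 1),
    (-1 : ℝ) ^ m * (2 * x) ^ (q - 2 * m) / (m.factorial * (q - 2 * m).factorial)

/-! Expanding each power in the Hermite basis, `(2x)^k / k! = Σ_j H_{k-2j}(x) / (j! (k-2j)!)`
(insert the explicit formula for `H` and collapse with `Σ_{i+j=s} (-1)^i / (i! j!) = [s = 0]`),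
the coefficient of `H_q(x) / q!` in `L_N^{(β)}(-2x) = Σ_k (β+k+1)_{N-k} / (N-k)! · (2x)^k / k!`
is `Σ_j (β+q+2j+1)_{N-q-2j} / ((N-q-2j)! j!)`. By the duplication formula
`(a/2)_l ((a+1)/2)_l = (a)_{2l} / 4^l`, applied to `a = q - N` and `a = β+q+1`, this is
`(β+q+1)_{N-q} / (N-q)!` times the terminating ₂F₂ sum. Shifting `p = n + q` with `β = α + n`
gives the theorem. -/

open Finset

lemma poch_succ (a : ℝ) (m : ℕ) : poch a (m + 1) = poch a m * (a + m) :=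
  prod_range_succ _ _

lemma poch_add (a : ℝ) (s t : ℕ) : poch a (s + t) = poch a s * poch (a + s) t := by
  rw [poch, prod_range_add]
  congr 1
  exact prod_congr rfl fun i _ => by push_cast; ring

lemma poch_eq_eval_ascPochhammer (a : ℝ) (m : ℕ) : poch a m = (ascPochhammer ℝ m).eval a := by
  induction m with
  | zero => simp [poch]
  | succ m ih => rw [poch_succ, ih, ascPochhammer_succ_eval]

lemma poch_pos {a : ℝ} (ha : 0 < a) (m : ℕ) : 0 < poch a m := by
  rw [poch_eq_eval_ascPochhammer]
  exact ascPochhammer_pos m a ha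

lemma poch_neg_natCast (M k : ℕ) : poch (-(M : ℝ)) k = (-1) ^ k * M.descFactorial k := by
  rw [poch_eq_eval_ascPochhammer, ascPochhammer_eval_neg_eq_descPochhammer,
    descPochhammer_eval_eq_descFactorial]

lemma poch_half_mul_poch_half_add_half (a : ℝ) (l : ℕ) :
    poch (a / 2) l * poch ((a + 1) / 2) l = poch a (2 * l) / 4 ^ l := by
  rw [eq_div_iff (by positivity)]
  induction l with
  | zero => simp [poch]
  | succ l ih =>
    rw [show 2 * (l + 1) = 2 * l + 1 + 1 by ring, poch_succ, poch_succ, poch_succ, poch_succ, ← ih]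
    push_cast
    ring

lemma sum_range_sum_range_add_mul {M : Type*} [AddCommMonoid M] (c N : ℕ) (hc : 0 < c)
    (f : ℕ → ℕ → M) :
    ∑ j ∈ range (N / c + 1), ∑ i ∈ range (N - c * j + 1), f j (c * j + i) =
      ∑ k ∈ range (N + 1), ∑ j ∈ range (k / c + 1), f j k := by
  have hIco (j : ℕ) (hj : c * j ≤ N) :
      ∑ i ∈ range (N - c * j + 1), f j (c * j + i) = ∑ k ∈ Ico (c * j) (N + 1), f j k := by
    rw [sum_Ico_eq_sum_range, Nat.sub_add_comm hj]
  rw [sum_congr rfl fun j hj => hIco j ?_]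
  · refine sum_comm' fun j k => ?_
    simp only [mem_range, mem_Ico, Nat.lt_succ_iff, Nat.le_div_iff_mul_le hc, mul_comm c]
    omega
  · simpa [Nat.lt_succ_iff, Nat.le_div_iff_mul_le hc, mul_comm c] using hj

lemma sum_range_neg_one_pow_div_factorial_mul_factorial (s : ℕ) :
    ∑ j ∈ range (s + 1), (-1 : ℝ) ^ (s - j) / (j.factorial * (s - j).factorial) =
      if s = 0 then 1 else 0 := by
  have hterm : ∀ j ∈ range (s + 1), (-1 : ℝ) ^ (s - j) / (j.factorial * (s - j).factorial) =
      1 ^ j * (-1) ^ (s - j) * s.choose j / s.factorial := fun j hj => by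
    rw [one_pow, Nat.cast_choose ℝ (Nat.lt_succ_iff.mp (mem_range.mp hj))]
    field_simp
  rw [sum_congr rfl hterm, ← sum_div, ← add_pow, add_neg_cancel, zero_pow_eq]
  split_ifs with hs <;> simp [hs]

lemma sum_hermiteP_div_factorial (k : ℕ) (x : ℝ) :
    ∑ j ∈ range (k / 2 + 1), hermiteP (k - 2 * j) x / (j.factorial * (k - 2 * j).factorial) =
      (2 * x) ^ k / k.factorial := by
  set g : ℕ → ℝ := fun s => (2 * x) ^ (k - 2 * s) / (k - 2 * s).factorial
  have hswap := sum_range_sum_range_add_mul 1 (k / 2) one_pos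
    fun j s => (-1 : ℝ) ^ (s - j) / (j.factorial * (s - j).factorial) * g s
  simp only [one_mul, Nat.div_one] at hswap
  have hexpand (j : ℕ) (_ : j ∈ range (k / 2 + 1)) :
      hermiteP (k - 2 * j) x / (j.factorial * (k - 2 * j).factorial) =
        ∑ i ∈ range (k / 2 - j + 1),
          (-1 : ℝ) ^ (j + i - j) / (j.factorial * (j + i - j).factorial) * g (j + i) := by
    rw [hermiteP, mul_sum, sum_div, show (k - 2 * j) / 2 = k / 2 - j by omega]
    refine sum_congr rfl fun i _ => ?_
    rw [Nat.add_sub_cancel_left, show k - 2 * j - 2 * i = k - 2 * (j + i) by omega]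
    simp only [g]
    field_simp
  rw [sum_congr rfl hexpand, hswap]
  simp_rw [← sum_mul, sum_range_neg_one_pow_div_factorial_mul_factorial]
  simp [g]

/-- The partial sum up to `L` of `₂F₂(a, b; c, d; 1)`; it is the whole series when the
series terminates before `L`. -/
def terminatingF22 (a b c d : ℝ) (L : ℕ) : ℝ :=
  ∑ l ∈ range (L + 1), poch a l * poch b l / (poch c l * poch d l * l.factorial)

lemma poch_div_factorial_mul_terminatingF22 {γ : ℝ} (hγ : 0 < γ) (M : ℕ) :
    poch γ M / M.factorial *
        terminatingF22 (-(M : ℝ) / 2) ((-(M : ℝ) + 1) / 2) (γ / 2) ((γ + 1) / 2) M =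
      ∑ l ∈ range (M / 2 + 1),
        poch (γ + 2 * l) (M - 2 * l) / ((M - 2 * l).factorial * l.factorial) := by
  have hterm (l : ℕ) (_ : l ∈ range (M + 1)) :
      poch γ M / M.factorial * (poch (-(M : ℝ) / 2) l * poch ((-(M : ℝ) + 1) / 2) l /
          (poch (γ / 2) l * poch ((γ + 1) / 2) l * l.factorial)) =
        if 2 * l ≤ M then
          poch (γ + 2 * l) (M - 2 * l) / ((M - 2 * l).factorial * l.factorial) else 0 := by
    have hγl := (poch_pos hγ (2 * l)).ne'
    rw [poch_half_mul_poch_half_add_half, poch_half_mul_poch_half_add_half, poch_neg_natCast,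
      pow_mul, neg_one_sq, one_pow, one_mul]
    split_ifs with h
    · have hdesc : ((M - 2 * l).factorial : ℝ) * M.descFactorial (2 * l) = M.factorial := by
        exact_mod_cast Nat.factorial_mul_descFactorial h
      have hsplit := poch_add γ (2 * l) (M - 2 * l)
      rw [Nat.add_sub_cancel' h] at hsplit
      have hdesc_ne : (M.descFactorial (2 * l) : ℝ) ≠ 0 :=
        Nat.cast_ne_zero.2 (Nat.descFactorial_eq_zero_iff_lt.not.2 (by omega))
      rw [hsplit, ← hdesc]
      push_cast
      field_simp
    · rw [Nat.descFactorial_eq_zero_iff_lt.mpr (by omega)]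
      simp
  rw [terminatingF22, mul_sum, sum_congr rfl hterm, ← sum_filter]
  congr 1
  ext l
  simp only [mem_filter, mem_range]
  omega

lemma lagP_neg_two_mul (β : ℝ) (N : ℕ) (x : ℝ) :
    lagP β N (-2 * x) = ∑ k ∈ range (N + 1),
      poch (β + k + 1) (N - k) / (N - k).factorial * ((2 * x) ^ k / k.factorial) := by
  refine sum_congr rfl fun k _ => ?_
  have hsign : (-1 : ℝ) ^ k * (-2 * x) ^ k = (2 * x) ^ k := by
    rw [← mul_pow]
    ring_nf
  rw [mul_right_comm, hsign]
  ring

theorem lagP_neg_two_mul_eq_sum_hermiteP {β : ℝ} (hβ : -1 < β) (N : ℕ) (x : ℝ) :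
    lagP β N (-2 * x) = ∑ q ∈ range (N + 1),
      poch (β + q + 1) (N - q) / ((N - q).factorial * q.factorial) *
        terminatingF22 (((q : ℝ) - N) / 2) (((q : ℝ) - N + 1) / 2)
          ((β + q + 1) / 2) ((β + q + 2) / 2) (N - q) *
        hermiteP q x := by
  set a : ℕ → ℝ := fun k => poch (β + k + 1) (N - k) / (N - k).factorial
  have hcoeff (q : ℕ) (hq : q ∈ range (N + 1)) :
      ∑ j ∈ range ((N - q) / 2 + 1), a (2 * j + q) / j.factorial =
        a q * terminatingF22 (((q : ℝ) - N) / 2) (((q : ℝ) - N + 1) / 2)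
          ((β + q + 1) / 2) ((β + q + 2) / 2) (N - q) := by
    have hqN : (q : ℝ) - N = -((N - q : ℕ) : ℝ) := by
      rw [Nat.cast_sub (Nat.lt_succ_iff.mp (mem_range.mp hq))]
      ring
    have hγ : 0 < β + q + 1 := by linarith [q.cast_nonneg (α := ℝ)]
    rw [hqN, show β + q + 2 = β + q + 1 + 1 by ring,
      poch_div_factorial_mul_terminatingF22 hγ]
    refine sum_congr rfl fun j _ => ?_
    simp only [a]
    rw [show N - (2 * j + q) = N - q - 2 * j by omega,
      show β + ((2 * j + q : ℕ) : ℝ) + 1 = β + q + 1 + 2 * j by push_cast; ring]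
    ring
  calc lagP β N (-2 * x)
      = ∑ k ∈ range (N + 1), ∑ j ∈ range (k / 2 + 1),
          a k / j.factorial * (hermiteP (k - 2 * j) x / (k - 2 * j).factorial) := by
        rw [lagP_neg_two_mul]
        refine sum_congr rfl fun k _ => ?_
        rw [← sum_hermiteP_div_factorial, mul_sum]
        refine sum_congr rfl fun j _ => ?_
        ring
    _ = ∑ q ∈ range (N + 1), ∑ j ∈ range ((N - q) / 2 + 1),
          a (2 * j + q) / j.factorial * (hermiteP q x / q.factorial) := by
        rw [← sum_range_sum_range_add_mul 2 N two_pos]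
        simp only [Nat.add_sub_cancel_left]
        refine sum_comm' fun j q => ?_
        simp only [mem_range]
        omega
    _ = _ := by
        refine sum_congr rfl fun q hq => ?_
        rw [← sum_mul, hcoeff q hq]
        ring

/-- connection coefficients between Laguerre and Hermite polynomials. -/
theorem laguerre_hermite_connection (m n : ℕ) (hnm : n ≤ m) (α : ℝ) (hα : 0 < α) (x : ℝ) :
    lagP (α + n) (m - n) (-2 * x) =
      ∑ p ∈ Finset.Icc n m,
        poch (α + p + 1) (m - p) / ((m - p).factorial * (p - n).factorial) *
          (∑ l ∈ Finset.range (m - p + 1),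
            poch (((p : ℝ) - m) / 2) l * poch (((p : ℝ) - m + 1) / 2) l /
              (poch ((α + p + 1) / 2) l * poch ((α + p + 2) / 2) l * l.factorial)) *
          hermiteP (p - n) x := by
  have hβ : -1 < α + n := by linarith [n.cast_nonneg (α := ℝ)]
  rw [lagP_neg_two_mul_eq_sum_hermiteP hβ, ← Ico_add_one_right_eq_Icc, sum_Ico_eq_sum_range,
    Nat.sub_add_comm hnm]
  refine sum_congr rfl fun q _ => ?_
  have hshift : α + ((n + q : ℕ) : ℝ) = α + n + q := by push_cast; ring
  have hdiff : ((n + q : ℕ) : ℝ) - m = q - ((m - n : ℕ) : ℝ) := by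
    rw [Nat.cast_sub hnm]; push_cast; ring
  rw [hshift, hdiff, Nat.add_sub_cancel_left, show m - (n + q) = m - n - q by omega]
  rfl
end
end

section
/- Let α > 0, ν > 0, δ_k^{(ν)} > 0 for all k, and assume condition (C1) holds at level ν (which defines positive reals δ_k^{(ν+1)} = (k d^{(ν)} + c^{(ν)}) δ_k^{(ν)}). Then for every x > 0, W_μ^{(α,ν+1)}(x) = W_μ^{(α,ν)}(x) · Φ^{(α,ν)}(x), where Φ^{(α,ν)}(x) = (L_μ^{(α)}(0)^*)^{−1} ( −d^{(ν)} x² A_μ^* + x (d^{(ν)} J + c^{(ν)} I) ) L_μ^{(α)}(0)^*. In particular (W_μ^{(α,ν)}(x))^{−1} W_μ^{(α,ν+1)}(x) is a matrix polynomial of degree two in x. -/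
open scoped BigOperators
open Matrix MeasureTheory

noncomputable section

/-! The Taylor expansion of the Laguerre polynomials at `0` factors
`L_μ^{(α)}(x) = L_μ^{(α)}(0) exp(x A_μ)`, and since `A_μ` lowers the `J`-grading by one,
`J exp(x A_μ) = exp(x A_μ) J + x A_μ exp(x A_μ)`. By (C1), `T^{(ν+1)}(x) = T^{(ν)}(x) · x(dJ + cI)`;
moving the diagonal factor `x(dJ + cI)` through `exp(x A_μ)^*` with this commutation relation
produces `-d x² A_μ^*`, and the conjugation by `L_μ^{(α)}(0)^*` in `Φ` cancels against the right
factor `L_μ^{(α)}(x)^*` of `W`. -/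

lemma sum_ite_Icc_eq_sum_range {N : ℕ} {n m : Fin N} (hnm : (n : ℕ) ≤ m) (f : ℕ → ℝ) :
    ∑ p : Fin N, (if (n : ℕ) ≤ p ∧ (p : ℕ) ≤ m then f (p - n) else 0) =
      ∑ k ∈ Finset.range ((m : ℕ) - n + 1), f k := by
  have hm := m.isLt
  have hIco : (Finset.range N).filter (fun p => (n : ℕ) ≤ p ∧ p ≤ m) =
      Finset.Ico (n : ℕ) (m + 1) := by
    ext p
    simp only [Finset.mem_filter, Finset.mem_range, Finset.mem_Ico]
    omega
  rw [Fin.sum_univ_eq_sum_range (fun p => if (n : ℕ) ≤ p ∧ p ≤ m then f (p - n) else 0),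
    ← Finset.sum_filter, hIco, Finset.sum_Ico_eq_sum_range, Nat.sub_add_comm hnm]
  simp only [Nat.add_sub_cancel_left]

lemma lagP_apply_zero (β : ℝ) (n : ℕ) : lagP β n 0 = poch (β + 1) n / n.factorial := by
  rw [lagP, Finset.sum_eq_single 0 (fun k _ hk => by simp [zero_pow hk]) (by simp)]
  simp

lemma lagP_deg_zero (β x : ℝ) : lagP β 0 x = 1 := by
  simp [lagP, poch]

lemma lagP_eq_sum_lagP_zero (β : ℝ) (n : ℕ) (x : ℝ) :
    lagP β n x = ∑ k ∈ Finset.range (n + 1), lagP (β + k) (n - k) 0 * ((-x) ^ k / k.factorial) := by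
  refine Finset.sum_congr rfl fun k _ => ?_
  rw [lagP_apply_zero, neg_pow x, add_right_comm]
  field_simp

/-- The entries of `exp(x A_μ)`, a finite sum since `A_μ` is nilpotent. -/
def expAmu (N : ℕ) (μ : Fin N → ℝ) (x : ℝ) : Matrix (Fin N) (Fin N) ℝ :=
  Matrix.of fun m n : Fin N =>
    if (n : ℕ) ≤ m then μ m / μ n * ((-x) ^ ((m : ℕ) - n) / ((m : ℕ) - n).factorial) else 0

section

variable {N : ℕ} {μ : Fin N → ℝ}

lemma LagMat_eq_LagMat_zero_mul_expAmu (hμ : ∀ k, μ k ≠ 0) (α x : ℝ) :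
    LagMat N μ α x = LagMat N μ α 0 * expAmu N μ x := by
  ext m n
  simp only [LagMat, expAmu, Matrix.mul_apply, Matrix.of_apply]
  split_ifs with hnm
  · have hsummand : ∀ p : Fin N,
        (if (p : ℕ) ≤ m then μ m / μ p * lagP (α + (p : ℕ) + 1) ((m : ℕ) - p) 0 else 0) *
          (if (n : ℕ) ≤ p then μ p / μ n * ((-x) ^ ((p : ℕ) - n) / ((p : ℕ) - n).factorial) else 0) =
        if (n : ℕ) ≤ p ∧ (p : ℕ) ≤ m then
          μ m / μ n * (lagP (α + (n : ℕ) + 1 + ((p - n : ℕ) : ℝ)) ((m : ℕ) - n - (p - n)) 0 *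
            ((-x) ^ ((p : ℕ) - n) / ((p : ℕ) - n).factorial))
        else 0 := by
      intro p
      by_cases hpm : (p : ℕ) ≤ m <;> by_cases hnp : (n : ℕ) ≤ p <;> simp only [hpm, hnp,
        and_true, and_false, if_true, if_false, mul_zero, zero_mul]
      rw [Nat.cast_sub hnp, show α + (n : ℕ) + 1 + ((p : ℕ) - (n : ℕ)) = α + (p : ℕ) + 1 by ring,
        show (m : ℕ) - n - (p - n) = (m : ℕ) - p by omega]
      field_simp [hμ p, hμ n]
    rw [Finset.sum_congr rfl fun p _ => hsummand p, sum_ite_Icc_eq_sum_range hnm fun k =>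
        μ m / μ n * (lagP (α + (n : ℕ) + 1 + k) ((m : ℕ) - n - k) 0 * ((-x) ^ k / k.factorial)),
      ← Finset.mul_sum, ← lagP_eq_sum_lagP_zero]
  · refine (Finset.sum_eq_zero fun p _ => ?_).symm
    split_ifs <;> first | omega | simp

lemma AmuMat_mul_apply_of_val_eq_zero (M : Matrix (Fin N) (Fin N) ℝ) {m : Fin N}
    (hm : (m : ℕ) = 0) (n : Fin N) : (AmuMat N μ * M) m n = 0 := by
  rw [Matrix.mul_apply]
  exact Finset.sum_eq_zero fun p _ => by simp [AmuMat, hm]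

lemma AmuMat_mul_apply_of_val_eq_succ (M : Matrix (Fin N) (Fin N) ℝ) {m p : Fin N}
    (hmp : (m : ℕ) = p + 1) (n : Fin N) : (AmuMat N μ * M) m n = -(μ m / μ p) * M p n := by
  rw [Matrix.mul_apply, Finset.sum_eq_single p]
  · simp [AmuMat, hmp]
  · intro q _ hqp
    have : (m : ℕ) ≠ q + 1 := fun h => hqp (Fin.ext (by omega))
    simp [AmuMat, this]
  · simp

lemma sub_mul_expAmu_apply (hμ : ∀ k, μ k ≠ 0) (x : ℝ) (m n : Fin N) :
    (((m : ℕ) : ℝ) - (n : ℕ)) * expAmu N μ x m n = x * (AmuMat N μ * expAmu N μ x) m n := by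
  obtain ⟨m, hm⟩ := m
  cases m with
  | zero =>
    rw [AmuMat_mul_apply_of_val_eq_zero _ rfl]
    by_cases hn : (n : ℕ) = 0
    · simp [hn]
    · simp only [expAmu, Matrix.of_apply, if_neg (show ¬ (n : ℕ) ≤ 0 by omega)]
      ring
  | succ p =>
    rw [AmuMat_mul_apply_of_val_eq_succ (p := ⟨p, by omega⟩) _ rfl]
    simp only [expAmu, Matrix.of_apply]
    by_cases hnp : (n : ℕ) ≤ p
    · obtain ⟨k, rfl⟩ : ∃ k, p = n + k := ⟨p - n, by omega⟩
      rw [if_pos hnp, if_pos (by omega), show (n : ℕ) + k + 1 - n = k + 1 by omega,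
        Nat.add_sub_cancel_left, pow_succ, Nat.factorial_succ]
      push_cast
      field_simp [hμ ⟨n + k, by omega⟩, hμ n]
      ring
    · rw [if_neg hnp]
      by_cases hnm : (n : ℕ) = p + 1
      · simp [hnm]
      · simp [if_neg (by omega : ¬ (n : ℕ) ≤ p + 1)]

lemma Jmat_mul_expAmu (hμ : ∀ k, μ k ≠ 0) (x : ℝ) :
    Jmat N * expAmu N μ x = expAmu N μ x * Jmat N + x • (AmuMat N μ * expAmu N μ x) := by
  ext m n
  rw [Matrix.add_apply, Matrix.smul_apply, smul_eq_mul, ← sub_mul_expAmu_apply hμ]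
  simp only [Jmat, Matrix.diagonal_mul, Matrix.mul_diagonal]
  ring

lemma smul_Jmat_add_one_mul_transpose_expAmu (hμ : ∀ k, μ k ≠ 0) (c d x : ℝ) :
    x • (d • Jmat N + c • (1 : Matrix (Fin N) (Fin N) ℝ)) * (expAmu N μ x)ᵀ =
      (expAmu N μ x)ᵀ *
        (-(d * x ^ 2) • (AmuMat N μ)ᵀ + x • (d • Jmat N + c • (1 : Matrix (Fin N) (Fin N) ℝ))) := by
  have hJE : Jmat N * (expAmu N μ x)ᵀ =
      (expAmu N μ x)ᵀ * Jmat N - x • ((expAmu N μ x)ᵀ * (AmuMat N μ)ᵀ) := by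
    have h := congrArg Matrix.transpose (Jmat_mul_expAmu hμ x)
    simp only [Matrix.transpose_mul, Matrix.transpose_add, Matrix.transpose_smul, Jmat,
      Matrix.diagonal_transpose] at h
    rw [Jmat, eq_sub_iff_add_eq, h]
  simp only [smul_mul_assoc, add_mul, one_mul, Matrix.mul_add, Matrix.mul_smul, Matrix.mul_one, hJE]
  module

lemma LagMat_isLowerTriangular (α x : ℝ) : (LagMat N μ α x).IsLowerTriangular :=
  fun _ _ hij => if_neg (not_le.mpr (Fin.lt_def.mp (OrderDual.toDual_lt_toDual.mp hij)))

lemma det_LagMat (hμ : ∀ k, μ k ≠ 0) (α x : ℝ) : (LagMat N μ α x).det = 1 := by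
  rw [Matrix.det_of_isLowerTriangular _ (LagMat_isLowerTriangular α x)]
  refine Finset.prod_eq_one fun i _ => ?_
  simp [LagMat, lagP_deg_zero, hμ i]

end

lemma Tmat_succ {N : ℕ} {δ δ' : Fin N → ℝ} {c d : ℝ}
    (hδ' : ∀ k : Fin N, δ' k = (((k : ℕ) + 1) * d + c) * δ k) (ν : ℝ) {x : ℝ} (hx : x ≠ 0) :
    Tmat N δ' (ν + 1) x =
      Tmat N δ ν x * x • (d • Jmat N + c • (1 : Matrix (Fin N) (Fin N) ℝ)) := by
  have hdiag : x • (d • Jmat N + c • (1 : Matrix (Fin N) (Fin N) ℝ)) =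
      Matrix.diagonal fun k : Fin N => x * (((k : ℕ) + 1) * d + c) := by
    rw [Jmat, ← Matrix.diagonal_one, ← Matrix.diagonal_smul, ← Matrix.diagonal_smul,
      Matrix.diagonal_add, ← Matrix.diagonal_smul]
    congr 1
    ext k
    simp only [Pi.smul_apply, smul_eq_mul]
    ring
  rw [hdiag, Tmat, Tmat, Matrix.diagonal_mul_diagonal]
  congr 1
  ext k
  rw [hδ' k, show ν + 1 + ((k : ℕ) : ℝ) + 1 = ν + (k : ℕ) + 1 + 1 by ring, Real.rpow_add_one hx]
  ring

theorem pearson_Phi_general (N : ℕ) (μ : Fin N → ℝ) (hμ : ∀ k, μ k ≠ 0)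
    (α ν : ℝ) (δ δ' : Fin N → ℝ)
    (c d : ℝ)
    (hC1 : ∀ k : Fin N, δ' k = (((k : ℕ) + 1) * d + c) * δ k)
    (x : ℝ) (hx : 0 < x) :
    Wmat N μ δ' α (ν + 1) x = Wmat N μ δ α ν x * PhiMat N μ α c d x := by
  have hL0 : IsUnit (LagMat N μ α 0)ᵀ.det := by
    rw [Matrix.det_transpose, det_LagMat hμ]
    exact isUnit_one
  rw [Wmat, Wmat, PhiMat, Tmat_succ hC1 ν hx.ne', LagMat_eq_LagMat_zero_mul_expAmu hμ α x,
    Matrix.transpose_mul]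
  simp only [Matrix.mul_assoc, Matrix.mul_nonsing_inv_cancel_left _ _ hL0]
  rw [← Matrix.mul_assoc (x • _), smul_Jmat_add_one_mul_transpose_expAmu hμ, Matrix.mul_assoc]

/-- the first Pearson equation `W^{(α,ν+1)} = W^{(α,ν)} Φ^{(α,ν)}`. -/
theorem pearson_Phi (N : ℕ) (hN : 1 ≤ N) (μ : Fin N → ℝ) (hμ : ∀ k, μ k ≠ 0)
    (α ν : ℝ) (hα : 0 < α) (hν : 0 < ν) (δ δ' : Fin N → ℝ) (hδ : ∀ k, 0 < δ k)
    (c d : ℝ) (hc : 0 < c) (hd : 0 < d)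
    (hC1 : ∀ k : Fin N, δ' k = (((k : ℕ) + 1) * d + c) * δ k)
    (x : ℝ) (hx : 0 < x) :
    Wmat N μ δ' α (ν + 1) x = Wmat N μ δ α ν x * PhiMat N μ α c d x :=
  pearson_Phi_general N μ hμ α ν δ δ' c d hC1 x hx
end
end
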